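/- arXiv:1002.1331 — 3 statements merged into one kernel-verified Lean document; each statement's English description precedes it below -/
import Mathlib

section
/- If {(X_{[I]})_0}_{I ∈ B} is a basis of ℝ^p for a set B of p multiindices of weight ≤ r, then the p row vectors (A_{IJ})_{|J| ≤ r}, for I ∈ B, of the universal matrix A are linearly independent; consequently p ≤ rank[A_{IJ}]_{|I|,|J| ≤ r}, a constant depending only on r and n. -/
open scoped BigOperators

noncomputable section

abbrev VF (p : ℕ) := (Fin p → ℝ) → (Fin p → ℝ)

def vfBracket {p : ℕ} (X Y : VF p) : VF p :=
  fun x => fderiv ℝ Y x (X x) - fderiv ℝ X x (Y x)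

def idxWt {n : ℕ} (i : Fin (n + 1)) : ℕ := if i = 0 then 2 else 1

def wt {n : ℕ} (I : List (Fin (n + 1))) : ℕ := (I.map idxWt).sum

def nbrk {n p : ℕ} (X : Fin (n + 1) → VF p) : List (Fin (n + 1)) → VF p
  | [] => fun _ => 0
  | [i] => X i
  | i :: j :: I => vfBracket (X i) (nbrk X (j :: I))

def abrk {n : ℕ} : List (Fin (n + 1)) → FreeAlgebra ℝ (Fin (n + 1))
  | [] => 0
  | [i] => FreeAlgebra.ι ℝ i
  | i :: j :: I => FreeAlgebra.ι ℝ i * abrk (j :: I) - abrk (j :: I) * FreeAlgebra.ι ℝ i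

lemma Dsmooth {p : ℕ} {F : Type*} [NormedAddCommGroup F] [NormedSpace ℝ F]
    {Y : VF p} {f : (Fin p → ℝ) → F} (hY : ContDiff ℝ (⊤ : ℕ∞) Y) (hf : ContDiff ℝ (⊤ : ℕ∞) f) :
    ContDiff ℝ (⊤ : ℕ∞) (fun x => fderiv ℝ f x (Y x)) :=
  (hf.fderiv_right (by simp)).clm_apply hY

lemma brkD {p : ℕ} {Y Z : VF p} (hY : ContDiff ℝ (⊤ : ℕ∞) Y) (hZ : ContDiff ℝ (⊤ : ℕ∞) Z)
    {f : (Fin p → ℝ) → ℝ} (hf : ContDiff ℝ (⊤ : ℕ∞) f) (x : Fin p → ℝ) :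
    fderiv ℝ f x (vfBracket Y Z x)
      = fderiv ℝ (fun y => fderiv ℝ f y (Z y)) x (Y x)
        - fderiv ℝ (fun y => fderiv ℝ f y (Y y)) x (Z x) := by
  have hdf : ContDiff ℝ (⊤ : ℕ∞) (fderiv ℝ f) := hf.fderiv_right (by simp)
  rw [fderiv_clm_apply (hdf.differentiable (by simp) x) (hZ.differentiable (by simp) x),
      fderiv_clm_apply (hdf.differentiable (by simp) x) (hY.differentiable (by simp) x)]
  have hs := hf.contDiffAt.isSymmSndFDerivAt (x := x) (by rw [minSmoothness_of_isRCLikeNormedField]; exact WithTop.coe_le_coe.mpr le_top)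
  simp only [vfBracket, ContinuousLinearMap.add_apply, ContinuousLinearMap.coe_comp',
    Function.comp_apply, ContinuousLinearMap.flip_apply, map_sub]
  rw [hs (Y x) (Z x)]
  ring

def Sm (p : ℕ) : Submodule ℝ ((Fin p → ℝ) → ℝ) where
  carrier := {f | ContDiff ℝ (⊤ : ℕ∞) f}
  add_mem' hf hg := ContDiff.add (Set.mem_setOf.mp hf) (Set.mem_setOf.mp hg)
  zero_mem' := by change ContDiff ℝ (⊤ : ℕ∞) (fun _ => (0:ℝ)); exact contDiff_const
  smul_mem' c f hf := by
    have h : ContDiff ℝ (⊤ : ℕ∞) f := hf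
    change ContDiff ℝ (⊤ : ℕ∞) (fun y => c • f y)
    exact h.const_smul c

lemma mem_Sm {p : ℕ} {f : (Fin p → ℝ) → ℝ} : f ∈ Sm p ↔ ContDiff ℝ (⊤ : ℕ∞) f := by exact Iff.rfl

lemma smOf {p : ℕ} (f : Sm p) : ContDiff ℝ (⊤ : ℕ∞) (f : (Fin p → ℝ) → ℝ) := mem_Sm.mp f.2

def Dmap {p n : ℕ} (X : Fin (n + 1) → VF p) (hX : ∀ i, ContDiff ℝ (⊤ : ℕ∞) fun x => X i x)
    (i : Fin (n + 1)) : Module.End ℝ (Sm p) where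
  toFun f := ⟨fun x => fderiv ℝ (f : (Fin p → ℝ) → ℝ) x (X i x), mem_Sm.mpr (Dsmooth (hX i) (smOf f))⟩
  map_add' f g := by
    apply Subtype.ext
    funext x
    simp only [Submodule.coe_add, Pi.add_apply]
    rw [fderiv_add (((smOf f).differentiable (by simp)) x)
      (((smOf g).differentiable (by simp)) x)]
    simp
  map_smul' c f := by
    apply Subtype.ext
    funext x
    simp only [Submodule.coe_smul, Pi.smul_apply]
    rw [fderiv_const_smul (((smOf f).differentiable (by simp)) x) c]
    simp

lemma keyLemma {p n : ℕ} (X : Fin (n + 1) → VF p) (hX : ∀ i, ContDiff ℝ (⊤ : ℕ∞) fun x => X i x) :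
    ∀ (I : List (Fin (n + 1))), I ≠ [] →
      ContDiff ℝ (⊤ : ℕ∞) (nbrk X I) ∧
      ∀ (f : Sm p) (x : Fin p → ℝ),
        ((FreeAlgebra.lift ℝ (Dmap X hX) (abrk I)) f).1 x
          = fderiv ℝ (f : (Fin p → ℝ) → ℝ) x (nbrk X I x) := by
  intro I
  induction I with
  | nil => intro h; exact absurd rfl h
  | cons i rest ih =>
    intro _
    cases rest with
    | nil =>
      refine ⟨hX i, fun f x => ?_⟩
      simp only [nbrk, abrk, FreeAlgebra.lift_ι_apply]
      rfl
    | cons j I' =>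
      obtain ⟨hsm, hval⟩ := ih (by simp)
      set Z := nbrk X (j :: I') with hZdef
      have hnb : nbrk X (i :: j :: I') = vfBracket (X i) Z := rfl
      have hbsm : ContDiff ℝ (⊤ : ℕ∞) (vfBracket (X i) Z) :=
        (Dsmooth (hX i) hsm).sub (Dsmooth hsm (hX i))
      refine ⟨hnb ▸ hbsm, fun f x => ?_⟩
      have hab : abrk (i :: j :: I')
          = FreeAlgebra.ι ℝ i * abrk (j :: I') - abrk (j :: I') * FreeAlgebra.ι ℝ i := rfl
      rw [hnb, hab, map_sub, map_mul, map_mul, FreeAlgebra.lift_ι_apply]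
      have hφRf : (((FreeAlgebra.lift ℝ (Dmap X hX)) (abrk (j :: I')) f : Sm p)
            : (Fin p → ℝ) → ℝ)
          = fun y => fderiv ℝ (f : (Fin p → ℝ) → ℝ) y (Z y) := funext fun y => hval f y
      have h1 : (((Dmap X hX i * (FreeAlgebra.lift ℝ (Dmap X hX)) (abrk (j :: I'))
            - (FreeAlgebra.lift ℝ (Dmap X hX)) (abrk (j :: I')) * Dmap X hX i) f
              : Sm p) : (Fin p → ℝ) → ℝ) x
          = fderiv ℝ (fun y => fderiv ℝ (f : (Fin p → ℝ) → ℝ) y (Z y)) x (X i x)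
            - fderiv ℝ (fun y => fderiv ℝ (f : (Fin p → ℝ) → ℝ) y (X i y)) x (Z x) := by
        simp only [LinearMap.sub_apply, Module.End.mul_apply, Submodule.coe_sub, Pi.sub_apply]
        congr 2
        · exact congrArg (fun (h : (Fin p → ℝ) → ℝ) => fderiv ℝ h x (X i x)) hφRf
        · rw [hval ((Dmap X hX i) f) x]
          rfl
      rw [h1, brkD (hX i) hsm (smOf f) x]

def Amat {n : ℕ} (I J : List (Fin (n + 1))) : ℝ :=
  (FreeAlgebra.equivMonoidAlgebraFreeMonoid (R := ℝ) (X := Fin (n + 1)) (abrk I)).coeff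
    (FreeMonoid.ofList J)

/-- if `{(X_{[I]})_0}_{I ∈ B}` is a basis of `ℝ^p` (a linearly independent
family of `p = |B|` vectors, `B` consisting of multiindices of weight `≤ r`), then the rows
`(A_{IJ})_J`, `I ∈ B`, of the universal matrix are linearly independent; consequently
`p ≤ rank [A_{IJ}]_{|I|,|J| ≤ r}`, a quantity depending only on `r` and `n`. -/
theorem stmt5 (p n r : ℕ) (X : Fin (n + 1) → VF p)
    (hX : ∀ i j, ContDiff ℝ (⊤ : ℕ∞) fun x => X i x j)
    (B : Finset (List (Fin (n + 1)))) (hBcard : B.card = p)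
    (hBwt : ∀ I ∈ B, I ≠ [] ∧ wt I ≤ r)
    (hBbasis : LinearIndependent ℝ (fun I : B => nbrk X I.1 0)) :
    LinearIndependent ℝ
        (fun I : B => (fun J => Amat I.1 J : List (Fin (n + 1)) → ℝ)) ∧
      (p : Cardinal) ≤ Module.rank ℝ
        (Submodule.span ℝ
          {v : List (Fin (n + 1)) → ℝ |
            ∃ I : List (Fin (n + 1)), I ≠ [] ∧ wt I ≤ r ∧ v = fun J => Amat I J}) := by
  have hXf : ∀ i, ContDiff ℝ (⊤ : ℕ∞) (fun x => X i x) := fun i => contDiff_pi.mpr (hX i)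
  have li1 : LinearIndependent ℝ
      (fun I : B => (fun J => Amat I.1 J : List (Fin (n + 1)) → ℝ)) := by
    rw [Fintype.linearIndependent_iff]
    intro g hg
    have hcoef : ∀ J, ∑ I : B, g I * Amat I.1 J = 0 := by
      intro J
      have h := congrFun hg J
      simpa [Finset.sum_apply] using h
    have ha : (∑ I : B, g I • abrk I.1) = 0 := by
      apply (FreeAlgebra.equivMonoidAlgebraFreeMonoid (R := ℝ) (X := Fin (n + 1))).injective
      rw [map_zero, map_sum]
      ext m
      simp only [map_smul, Finsupp.coe_zero, Pi.zero_apply]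
      rw [MonoidAlgebra.coeff_sum, MonoidAlgebra.coeff_zero, Finsupp.finset_sum_apply]
      have h := hcoef (FreeMonoid.toList m)
      simpa [Amat, FreeMonoid.ofList_toList, MonoidAlgebra.coeff_smul_apply] using h
    have hφ : (∑ I : B, g I • (FreeAlgebra.lift ℝ (Dmap X hXf)) (abrk I.1))
        = (0 : Module.End ℝ (Sm p)) := by
      have h := congrArg (FreeAlgebra.lift ℝ (Dmap X hXf)) ha
      simpa [map_sum, map_smul] using h
    have hvec : (∑ I : B, g I • nbrk X I.1 0) = 0 := by
      funext k
      have hfk : ContDiff ℝ (⊤ : ℕ∞) (fun x : Fin p → ℝ => x k) :=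
        (ContinuousLinearMap.proj (R := ℝ) (φ := fun _ : Fin p => ℝ) k).contDiff
      set fk : Sm p := ⟨fun x : Fin p → ℝ => x k, mem_Sm.mpr hfk⟩ with hfkdef
      have h0 := congrFun (congrArg
        (fun (T : Module.End ℝ (Sm p)) => ((T fk : Sm p) : (Fin p → ℝ) → ℝ)) hφ) 0
      have hproj : ∀ v : Fin p → ℝ,
          fderiv ℝ (fun x : Fin p → ℝ => x k) 0 v = v k := by
        intro v
        rw [show (fun x : Fin p → ℝ => x k)
            = ⇑(ContinuousLinearMap.proj (R := ℝ) (φ := fun _ : Fin p => ℝ) k) from rfl,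
          ContinuousLinearMap.fderiv]
        rfl
      simp only [LinearMap.sum_apply, LinearMap.smul_apply, LinearMap.zero_apply,
        AddSubmonoidClass.coe_finset_sum, SetLike.val_smul, Finset.sum_apply,
        Pi.smul_apply, smul_eq_mul, ZeroMemClass.coe_zero, Pi.zero_apply] at h0
      have h1 : ∀ I : B,
          ((((FreeAlgebra.lift ℝ (Dmap X hXf)) (abrk I.1)) fk : Sm p)
            : (Fin p → ℝ) → ℝ) 0 = nbrk X I.1 0 k := by
        intro I
        rw [(keyLemma X hXf I.1 (hBwt I.1 I.2).1).2 fk 0]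
        exact hproj (nbrk X I.1 0)
      simp only [h1] at h0
      simpa [Finset.sum_apply] using h0
    rw [Fintype.linearIndependent_iff] at hBbasis
    exact hBbasis g hvec
  refine ⟨li1, ?_⟩
  set S : Set (List (Fin (n + 1)) → ℝ) :=
    {v | ∃ I : List (Fin (n + 1)), I ≠ [] ∧ wt I ≤ r ∧ v = fun J => Amat I J} with hS
  have hmem : ∀ I : B, (fun J => Amat I.1 J) ∈ S :=
    fun I => ⟨I.1, (hBwt I.1 I.2).1, (hBwt I.1 I.2).2, rfl⟩
  let w : B → Submodule.span ℝ S :=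
    fun I => ⟨fun J => Amat I.1 J, Submodule.subset_span (hmem I)⟩
  have li2 : LinearIndependent ℝ w :=
    LinearIndependent.of_comp (Submodule.span ℝ S).subtype li1
  calc (p : Cardinal) = (B.card : Cardinal) := by rw [hBcard]
    _ = Cardinal.mk B := Cardinal.mk_coe_finset.symm
    _ ≤ Module.rank ℝ (Submodule.span ℝ S) := li2.cardinal_le_rank
end
end

section
/- (Ball-box theorem, easy inclusion.) Let X_0,...,X_n be smooth vector fields on Ω ⊆ ℝ^p, free up to weight r, with {(X_{[I]})_x}_{I∈B} a basis at each point, and let d be the Nagel–Stein–Wainger distance. Then Box(x̄,R) ⊆ B(x̄,R): for every point x = exp(Σ_{I∈B} u_I X_{[I]})(x̄) with |u_I| < R^{|I|} for all I ∈ B, one has d(x̄,x) < R, because the curve φ(t) = exp(Σ_{I∈B} t u_I X_{[I]})(x̄) belongs to the class C(δ) for some δ < R. -/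
open scoped BigOperators

noncomputable section

/-- The Nagel–Stein–Wainger distance induced by the commutators `X_{[I]}`, `|I| ≤ r`:
the infimum of the `δ > 0` for which some curve `φ` with
`φ' = Σ_{|I| ≤ r} a_I(t) (X_{[I]})_{φ(t)}`, `|a_I(t)| ≤ δ^{|I|}`, joins `x` to `y` in unit
time. -/
def CCdist {n p : ℕ} (X : Fin (n + 1) → VF p) (r : ℕ) (x y : Fin p → ℝ) : ℝ :=
  sInf {δ : ℝ | 0 < δ ∧
    ∃ (φ : ℝ → (Fin p → ℝ)) (a : List (Fin (n + 1)) → ℝ → ℝ),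
      φ 0 = x ∧ φ 1 = y ∧
      (∀ (I : List (Fin (n + 1))) (t : ℝ), a I t ≠ 0 → I ≠ [] ∧ wt I ≤ r) ∧
      (∀ (I : List (Fin (n + 1))) (t : ℝ), |a I t| ≤ δ ^ wt I) ∧
      ∀ t ∈ Set.Icc (0 : ℝ) 1,
        HasDerivAt φ (∑ᶠ I : List (Fin (n + 1)), a I t • nbrk X I (φ t)) t}

/-- ball-box theorem, easy inclusion `Box(x̄,R) ⊆ B(x̄,R)`: for any point
`x = exp(Σ_{I ∈ B} u_I X_{[I]})(x̄)` of the box, i.e. `x = φ(1)` for the flow `φ` of the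
field `Σ_{I ∈ B} u_I X_{[I]}` starting at `x̄`, with `|u_I| < R^{|I|}`, one has
`d(x̄, x) < R`. -/
theorem stmt13 (p n r : ℕ) (hr : 1 ≤ r) (X : Fin (n + 1) → VF p)
    (hX : ∀ i j, ContDiff ℝ (⊤ : ℕ∞) fun x => X i x j)
    (B : Finset (List (Fin (n + 1)))) (hB : ∀ I ∈ B, I ≠ [] ∧ wt I ≤ r)
    (xb : Fin p → ℝ) (R : ℝ) (hR : 0 < R)
    (u : List (Fin (n + 1)) → ℝ)
    (hu : ∀ I ∈ B, |u I| < R ^ wt I)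
    (husupp : ∀ I, u I ≠ 0 → I ∈ B)
    (φ : ℝ → (Fin p → ℝ)) (hφ0 : φ 0 = xb)
    (hφ : ∀ t : ℝ, HasDerivAt φ (∑ I ∈ B, u I • nbrk X I (φ t)) t) :
    CCdist X r xb (φ 1) < R := by
  -- Find δ ∈ (0, R) with |u I| ≤ δ ^ wt I for all I ∈ B.
  obtain ⟨δ, hδ0, hδR, hδu⟩ : ∃ δ, 0 < δ ∧ δ < R ∧ ∀ I ∈ B, |u I| ≤ δ ^ wt I := by
    rcases B.eq_empty_or_nonempty with hBe | hne
    · exact ⟨R / 2, by positivity, by linarith, by simp [hBe]⟩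
    · set M : ℝ := B.sup' hne fun I => |u I| / R ^ wt I with hM
      obtain ⟨I0, hI0⟩ := hne
      have hM0 : 0 ≤ M :=
        le_trans (by positivity) (Finset.le_sup' (f := fun I => |u I| / R ^ wt I) hI0)
      have hM1 : M < 1 := by
        rw [hM]; apply (Finset.sup'_lt_iff (f := fun I => |u I| / R ^ wt I) (H := ⟨I0, hI0⟩)).mpr
        intro I hI
        exact (div_lt_one (by positivity)).mpr (hu I hI)
      set c : ℝ := max (M ^ ((r : ℝ)⁻¹)) (1 / 2) with hc
      have hc0 : 0 < c := lt_of_lt_of_le (by norm_num) (le_max_right _ _)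
      have hc1 : c < 1 := by
        apply max_lt _ (by norm_num)
        exact Real.rpow_lt_one hM0 hM1 (by positivity)
      have hcr : M ≤ c ^ r := by
        calc M = (M ^ ((r : ℝ)⁻¹)) ^ (r : ℕ) := by
              rw [← Real.rpow_natCast (M ^ ((r : ℝ)⁻¹)) r, ← Real.rpow_mul hM0,
                inv_mul_cancel₀ (Nat.cast_ne_zero.mpr (by omega) : (r:ℝ) ≠ 0), Real.rpow_one]
          _ ≤ c ^ r := pow_le_pow_left₀ (Real.rpow_nonneg hM0 _) (le_max_left _ _) r
      refine ⟨c * R, by positivity, ?_, ?_⟩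
      · nlinarith
      · intro I hI
        have hw := (hB I hI).2
        have h1 : |u I| ≤ M * R ^ wt I := by
          have := Finset.le_sup' (f := fun I => |u I| / R ^ wt I) hI
          rw [div_le_iff₀ (by positivity)] at this
          exact this.trans_eq (by ring)
        calc |u I| ≤ M * R ^ wt I := h1
          _ ≤ c ^ r * R ^ wt I := by
              apply mul_le_mul_of_nonneg_right hcr (by positivity)
          _ ≤ c ^ wt I * R ^ wt I := by
              apply mul_le_mul_of_nonneg_right _ (by positivity)
              exact pow_le_pow_of_le_one hc0.le hc1.le hw
          _ = (c * R) ^ wt I := (mul_pow _ _ _).symm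
  -- δ belongs to the defining set.
  have hmem : δ ∈ {δ : ℝ | 0 < δ ∧
      ∃ (ψ : ℝ → (Fin p → ℝ)) (a : List (Fin (n + 1)) → ℝ → ℝ),
        ψ 0 = xb ∧ ψ 1 = φ 1 ∧
        (∀ (I : List (Fin (n + 1))) (t : ℝ), a I t ≠ 0 → I ≠ [] ∧ wt I ≤ r) ∧
        (∀ (I : List (Fin (n + 1))) (t : ℝ), |a I t| ≤ δ ^ wt I) ∧
        ∀ t ∈ Set.Icc (0 : ℝ) 1,
          HasDerivAt ψ (∑ᶠ I : List (Fin (n + 1)), a I t • nbrk X I (ψ t)) t} := by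
    refine ⟨hδ0, φ, fun I _ => u I, hφ0, rfl, ?_, ?_, ?_⟩
    · intro I t hI
      exact hB I (husupp I hI)
    · intro I t
      by_cases hI : I ∈ B
      · exact hδu I hI
      · have : u I = 0 := by by_contra h; exact hI (husupp I h)
        show |u I| ≤ δ ^ wt I; rw [this, abs_zero]; positivity
    · intro t _
      have hsub : (Function.support fun I => u I • nbrk X I (φ t)) ⊆ (B : Set _) := by
        intro I hI
        apply husupp
        intro h
        exact hI (by simp [h])
      rw [finsum_eq_sum_of_support_subset _ hsub]
      exact hφ t
  have hbdd : BddBelow {δ : ℝ | 0 < δ ∧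
      ∃ (ψ : ℝ → (Fin p → ℝ)) (a : List (Fin (n + 1)) → ℝ → ℝ),
        ψ 0 = xb ∧ ψ 1 = φ 1 ∧
        (∀ (I : List (Fin (n + 1))) (t : ℝ), a I t ≠ 0 → I ≠ [] ∧ wt I ≤ r) ∧
        (∀ (I : List (Fin (n + 1))) (t : ℝ), |a I t| ≤ δ ^ wt I) ∧
        ∀ t ∈ Set.Icc (0 : ℝ) 1,
          HasDerivAt ψ (∑ᶠ I : List (Fin (n + 1)), a I t • nbrk X I (ψ t)) t} :=
    ⟨0, fun x hx => hx.1.le⟩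
  exact lt_of_le_of_lt (csInf_le hbdd hmem) hδR
end
end

section
/- (Volume of balls and doubling for free vector fields.) Under the ball-box inclusions Box(x̄,R) ⊆ B(x̄,R) ⊆ Box(x̄,CR) for R ≤ R_0, and assuming the Jacobian determinant J(u,x) of the exponential map u ↦ exp(Σ_{I∈B} u_I X_{[I]})(x) is bounded above and below by positive constants on a compact set, one has c_1 R^Q ≤ |B(x̄,R)| ≤ c_2 R^Q for all x̄ ∈ Ω' and R ≤ R_0, where Q = Σ_{I∈B} |I|; consequently |B(x̄,2R)| ≤ c_3 |B(x̄,R)| (doubling). -/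
open scoped BigOperators
open MeasureTheory

noncomputable section

/-- The weighted cube `{u : |u_i| < R^{w i} for all i}`. -/
def wCube {ι : Type*} [Fintype ι] (w : ι → ℕ) (R : ℝ) : Set (ι → ℝ) :=
  {u | ∀ i, |u i| < R ^ w i}

/-!
The Jacobian bounds `m ≤ |J| ≤ M` and the change of variables formula make the volume of a box
`Φ(wCube w R)` comparable to the volume `2^n R^Q` of the weighted cube. The ball-box inclusions
then squeeze `|B(x̄,R)|` between `m 2^n R^Q` and `M 2^n (CR)^Q`, and two-sided bounds by a
multiple of `R^Q` give doubling with constant `c₂ 2^Q / c₁`.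
-/

open Set ENNReal

section ChangeOfVariables

variable {E : Type*} [NormedAddCommGroup E] [NormedSpace ℝ E] [FiniteDimensional ℝ E]
  [MeasurableSpace E] [BorelSpace E] (μ : Measure E) [μ.IsAddHaarMeasure]
  {f : E → E} {f' : E → E →L[ℝ] E} {s : Set E}

theorem ofReal_mul_addHaar_le_addHaar_image (hs : MeasurableSet s)
    (hf' : ∀ x ∈ s, HasFDerivWithinAt f (f' x) s x) (hf : InjOn f s) {m : ℝ}
    (hm : ∀ x ∈ s, m ≤ |(f' x).det|) :
    ENNReal.ofReal m * μ s ≤ μ (f '' s) :=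
  calc ENNReal.ofReal m * μ s = ∫⁻ _ in s, ENNReal.ofReal m ∂μ := (setLIntegral_const s _).symm
    _ ≤ ∫⁻ x in s, ENNReal.ofReal |(f' x).det| ∂μ :=
      setLIntegral_mono' hs fun x hx => ENNReal.ofReal_le_ofReal (hm x hx)
    _ ≤ μ (f '' s) := lintegral_abs_det_fderiv_le_addHaar_image μ hs hf' hf

theorem addHaar_image_le_ofReal_mul_addHaar (hs : MeasurableSet s)
    (hf' : ∀ x ∈ s, HasFDerivWithinAt f (f' x) s x) {M : ℝ}
    (hM : ∀ x ∈ s, |(f' x).det| ≤ M) :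
    μ (f '' s) ≤ ENNReal.ofReal M * μ s :=
  calc μ (f '' s) ≤ ∫⁻ x in s, ENNReal.ofReal |(f' x).det| ∂μ :=
      addHaar_image_le_lintegral_abs_det_fderiv μ hs hf'
    _ ≤ ∫⁻ _ in s, ENNReal.ofReal M ∂μ :=
      setLIntegral_mono' hs fun x hx => ENNReal.ofReal_le_ofReal (hM x hx)
    _ = ENNReal.ofReal M * μ s := setLIntegral_const s _

end ChangeOfVariables

section WeightedCube

variable {ι : Type*} [Fintype ι] (w : ι → ℕ)

theorem wCube_eq_pi (R : ℝ) :
    wCube w R = univ.pi fun i => Ioo (-(R ^ w i)) (R ^ w i) := by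
  ext u
  simp [wCube, abs_lt, and_comm]

theorem measurableSet_wCube (R : ℝ) : MeasurableSet (wCube w R) := by
  rw [wCube_eq_pi]
  exact MeasurableSet.univ_pi fun _ => measurableSet_Ioo

theorem volume_wCube {R : ℝ} (hR : 0 ≤ R) :
    volume (wCube w R) = ENNReal.ofReal (2 ^ Fintype.card ι * R ^ ∑ i, w i) := by
  have side : ∀ i, volume (Ioo (-(R ^ w i)) (R ^ w i)) = ENNReal.ofReal (2 * R ^ w i) := by
    intro i
    rw [Real.volume_Ioo]
    ring_nf
  rw [wCube_eq_pi, volume_pi_pi]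
  simp only [side]
  rw [← ENNReal.ofReal_prod_of_nonneg fun i _ => by positivity, Finset.prod_mul_distrib,
    Finset.prod_const, Finset.prod_pow_eq_pow_sum, Finset.card_univ]

theorem wCube_mono {R R' : ℝ} (hR : 0 ≤ R) (h : R ≤ R') : wCube w R ⊆ wCube w R' :=
  fun _ hu i => (hu i).trans_le (pow_le_pow_left₀ hR h _)

variable {w} {Φ : (ι → ℝ) → (ι → ℝ)} {R : ℝ}

theorem ofReal_le_volume_image_wCube (hR : 0 ≤ R)
    (hΦ : ∀ u ∈ wCube w R, DifferentiableAt ℝ Φ u) (hinj : InjOn Φ (wCube w R))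
    {m : ℝ} (hm₀ : 0 ≤ m)
    (hm : ∀ u ∈ wCube w R, m ≤ |LinearMap.det (fderiv ℝ Φ u : (ι → ℝ) →ₗ[ℝ] (ι → ℝ))|) :
    ENNReal.ofReal (m * 2 ^ Fintype.card ι * R ^ ∑ i, w i) ≤ volume (Φ '' wCube w R) := by
  rw [mul_assoc, ENNReal.ofReal_mul hm₀, ← volume_wCube w hR]
  exact ofReal_mul_addHaar_le_addHaar_image volume (measurableSet_wCube w R)
    (fun u hu => (hΦ u hu).hasFDerivAt.hasFDerivWithinAt) hinj hm

theorem volume_image_wCube_le_ofReal (hR : 0 ≤ R)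
    (hΦ : ∀ u ∈ wCube w R, DifferentiableAt ℝ Φ u) {M : ℝ} (hM₀ : 0 ≤ M)
    (hM : ∀ u ∈ wCube w R, |LinearMap.det (fderiv ℝ Φ u : (ι → ℝ) →ₗ[ℝ] (ι → ℝ))| ≤ M) :
    volume (Φ '' wCube w R) ≤ ENNReal.ofReal (M * 2 ^ Fintype.card ι * R ^ ∑ i, w i) := by
  rw [mul_assoc, ENNReal.ofReal_mul hM₀, ← volume_wCube w hR]
  exact addHaar_image_le_ofReal_mul_addHaar volume (measurableSet_wCube w R)
    (fun u hu => (hΦ u hu).hasFDerivAt.hasFDerivWithinAt) hM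

end WeightedCube

theorem le_ofReal_mul_of_pow_bounds {a b : ℝ≥0∞} {c₁ c₂ R : ℝ} {Q : ℕ} (hc₁ : 0 < c₁)
    (hc₂ : 0 ≤ c₂) (ha : ENNReal.ofReal (c₁ * R ^ Q) ≤ a)
    (hb : b ≤ ENNReal.ofReal (c₂ * (2 * R) ^ Q)) :
    b ≤ ENNReal.ofReal (c₂ * 2 ^ Q / c₁) * a :=
  calc b ≤ ENNReal.ofReal (c₂ * (2 * R) ^ Q) := hb
    _ = ENNReal.ofReal (c₂ * 2 ^ Q / c₁) * ENNReal.ofReal (c₁ * R ^ Q) := by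
      rw [← ENNReal.ofReal_mul (by positivity), mul_pow]
      field_simp
    _ ≤ ENNReal.ofReal (c₂ * 2 ^ Q / c₁) * a := mul_le_mul_right ha _

theorem stmt14_general (ι : Type*) [Fintype ι] (w : ι → ℕ)
    (Φ : (ι → ℝ) → (ι → ℝ) → (ι → ℝ))
    (Ball : (ι → ℝ) → ℝ → Set (ι → ℝ))
    (Ω' : Set (ι → ℝ)) (R₀ C : ℝ) (hR₀ : 0 < R₀) (hC : 1 ≤ C)
    (hincl : ∀ xb ∈ Ω', ∀ R : ℝ, 0 < R → R ≤ R₀ →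
      Φ xb '' wCube w R ⊆ Ball xb R ∧ Ball xb R ⊆ Φ xb '' wCube w (C * R))
    (hdiff : ∀ xb ∈ Ω', ∀ u ∈ wCube w (C * R₀), DifferentiableAt ℝ (Φ xb) u)
    (hinj : ∀ xb ∈ Ω', Set.InjOn (Φ xb) (wCube w (C * R₀)))
    (m M : ℝ) (hm : 0 < m)
    (hJ : ∀ xb ∈ Ω', ∀ u ∈ wCube w (C * R₀),
      m ≤ |LinearMap.det (fderiv ℝ (Φ xb) u : (ι → ℝ) →ₗ[ℝ] (ι → ℝ))| ∧
      |LinearMap.det (fderiv ℝ (Φ xb) u : (ι → ℝ) →ₗ[ℝ] (ι → ℝ))| ≤ M) :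
    ∃ c₁ c₂ c₃ : ℝ, 0 < c₁ ∧ 0 < c₂ ∧ 0 < c₃ ∧
      ∀ xb ∈ Ω', ∀ R : ℝ, 0 < R → R ≤ R₀ →
        (ENNReal.ofReal (c₁ * R ^ (∑ i, w i)) ≤ volume (Ball xb R) ∧
          volume (Ball xb R) ≤ ENNReal.ofReal (c₂ * R ^ (∑ i, w i))) ∧
        (2 * R ≤ R₀ →
          volume (Ball xb (2 * R)) ≤ ENNReal.ofReal c₃ * volume (Ball xb R)) := by
  set Q := ∑ i, w i
  set M' := max M m
  have hM' : 0 < M' := hm.trans_le (le_max_right _ _)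
  have hC₀ : 0 < C := one_pos.trans_le hC
  set c₁ := m * 2 ^ Fintype.card ι
  set c₂ := M' * 2 ^ Fintype.card ι * C ^ Q
  have hc₁ : 0 < c₁ := by positivity
  have hc₂ : 0 < c₂ := by positivity
  have bounds : ∀ xb ∈ Ω', ∀ R : ℝ, 0 < R → R ≤ R₀ →
      ENNReal.ofReal (c₁ * R ^ Q) ≤ volume (Ball xb R) ∧
        volume (Ball xb R) ≤ ENNReal.ofReal (c₂ * R ^ Q) := by
    intro xb hxb R hR hRR₀
    have hsub : wCube w R ⊆ wCube w (C * R₀) :=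
      wCube_mono w hR.le (hRR₀.trans (le_mul_of_one_le_left hR₀.le hC))
    have hsub' : wCube w (C * R) ⊆ wCube w (C * R₀) :=
      wCube_mono w (by positivity) (mul_le_mul_of_nonneg_left hRR₀ hC₀.le)
    refine ⟨?_, (measure_mono (hincl xb hxb R hR hRR₀).2).trans ?_⟩
    · exact (ofReal_le_volume_image_wCube hR.le (fun u hu => hdiff xb hxb u (hsub hu))
        ((hinj xb hxb).mono hsub) hm.le fun u hu => (hJ xb hxb u (hsub hu)).1).trans
        (measure_mono (hincl xb hxb R hR hRR₀).1)
    · refine (volume_image_wCube_le_ofReal (by positivity)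
        (fun u hu => hdiff xb hxb u (hsub' hu)) hM'.le
        fun u hu => (hJ xb hxb u (hsub' hu)).2.trans (le_max_left _ _)).trans_eq ?_
      rw [mul_pow, ← mul_assoc]
  refine ⟨c₁, c₂, c₂ * 2 ^ Q / c₁, hc₁, hc₂, by positivity, fun xb hxb R hR hRR₀ =>
    ⟨bounds xb hxb R hR hRR₀, fun h2R => ?_⟩⟩
  exact le_ofReal_mul_of_pow_bounds hc₁ hc₂.le (bounds xb hxb R hR hRR₀).1
    (bounds xb hxb (2 * R) (by positivity) h2R).2

/-- volume of balls and doubling for free vector fields: assuming the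
ball-box inclusions `Box(x̄,R) ⊆ B(x̄,R) ⊆ Box(x̄,CR)` for `R ≤ R₀` (where
`Box(x̄,R) = Φ_{x̄}(weighted cube)`), and that the Jacobian determinant of the exponential
map `u ↦ Φ_{x̄}(u)` is bounded above and below by positive constants (with `Φ_{x̄}`
injective on the relevant cube), one gets `c₁ R^Q ≤ |B(x̄,R)| ≤ c₂ R^Q` with
`Q = Σ_i w_i`, and hence the doubling property `|B(x̄,2R)| ≤ c₃ |B(x̄,R)|`. -/
theorem stmt14 (ι : Type*) [Fintype ι] (w : ι → ℕ) (hw : ∀ i, 1 ≤ w i)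
    (Φ : (ι → ℝ) → (ι → ℝ) → (ι → ℝ))
    (Ball : (ι → ℝ) → ℝ → Set (ι → ℝ))
    (Ω' : Set (ι → ℝ)) (R₀ C : ℝ) (hR₀ : 0 < R₀) (hC : 1 ≤ C)
    (hincl : ∀ xb ∈ Ω', ∀ R : ℝ, 0 < R → R ≤ R₀ →
      Φ xb '' wCube w R ⊆ Ball xb R ∧ Ball xb R ⊆ Φ xb '' wCube w (C * R))
    (hdiff : ∀ xb ∈ Ω', ∀ u ∈ wCube w (C * R₀), DifferentiableAt ℝ (Φ xb) u)
    (hinj : ∀ xb ∈ Ω', Set.InjOn (Φ xb) (wCube w (C * R₀)))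
    (m M : ℝ) (hm : 0 < m)
    (hJ : ∀ xb ∈ Ω', ∀ u ∈ wCube w (C * R₀),
      m ≤ |LinearMap.det (fderiv ℝ (Φ xb) u : (ι → ℝ) →ₗ[ℝ] (ι → ℝ))| ∧
      |LinearMap.det (fderiv ℝ (Φ xb) u : (ι → ℝ) →ₗ[ℝ] (ι → ℝ))| ≤ M) :
    ∃ c₁ c₂ c₃ : ℝ, 0 < c₁ ∧ 0 < c₂ ∧ 0 < c₃ ∧
      ∀ xb ∈ Ω', ∀ R : ℝ, 0 < R → R ≤ R₀ →
        (ENNReal.ofReal (c₁ * R ^ (∑ i, w i)) ≤ volume (Ball xb R) ∧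
          volume (Ball xb R) ≤ ENNReal.ofReal (c₂ * R ^ (∑ i, w i))) ∧
        (2 * R ≤ R₀ →
          volume (Ball xb (2 * R)) ≤ ENNReal.ofReal c₃ * volume (Ball xb R)) :=
  stmt14_general ι w Φ Ball Ω' R₀ C hR₀ hC hincl hdiff hinj m M hm hJ
end
end
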